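/- arXiv:1903.10891 — 4 statements merged into one kernel-verified Lean document; each statement's English description precedes it below -/
import Mathlib

section
/- For all integers m ≥ 7 and n ≥ (m-3)(m-1), there exists a red/blue coloring of the edges of the graph K_{(m-1)(n-1)} ⊔ K_{1,(m-2)(n-1)+1} (the complete graph on (m-1)(n-1)+1 vertices with one vertex having exactly n-2 of its incident edges deleted) that contains no red cycle C_n and no blue complete graph K_m. Such a coloring is obtained by taking the red graph to consist of m-2 pairwise vertex-disjoint copies of K_{n-1} together with a further disjoint copy of K_{n-1} joined by a single red edge to the extra vertex, all remaining edges being blue. -/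
/-!
Let the block of a vertex be the index of its red clique, the extra vertex being put in the
last one. Red edges stay inside a block and blue edges join different blocks. So the block
index is a proper colouring of the blue graph with `m - 1` colours, and there is no blue `K_m`.
A red cycle stays inside one block and avoids the extra vertex, whose only red neighbour makes
it a leaf. A block has at most `n - 1` other vertices, so the cycle has fewer than `n` vertices.
-/

open SimpleGraph

/-- `G` contains a cycle of length `n` (as a subgraph). -/
def HasCycleOfLength {V : Type*} (G : SimpleGraph V) (n : ℕ) : Prop :=
  ∃ (v : V) (w : G.Walk v v), w.IsCycle ∧ w.length = n

/-- `K_N ⊔ K_{1,k}` : the complete graph on the vertices `0, …, N-1` together with one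
extra vertex (the vertex `N`) joined to exactly `k` vertices of the complete graph
(those with value `< k`). -/
def KStarG (N k : ℕ) : SimpleGraph (Fin (N + 1)) where
  Adj v w := v ≠ w ∧ ((v : ℕ) = N → (w : ℕ) < k) ∧ ((w : ℕ) = N → (v : ℕ) < k)
  symm := by
    constructor
    intro v w h
    exact ⟨h.1.symm, h.2.2, h.2.1⟩
  loopless := by
    constructor
    intro v h
    exact h.1 rfl

/-- The red graph of the critical colouring: `m-2` pairwise vertex-disjoint copies of
`K_{n-1}` (the blocks `⌊v/(n-1)⌋ = 0, …, m-3`), together with a further disjoint copy of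
`K_{n-1}` (the block `⌊v/(n-1)⌋ = m-2`) joined by the single red edge
`{(m-1)(n-1), (m-2)(n-1)}` to the extra vertex `(m-1)(n-1)`. -/
def redCritical (m n : ℕ) : SimpleGraph (Fin ((m - 1) * (n - 1) + 1)) where
  Adj v w := v ≠ w ∧
    (((v : ℕ) < (m - 1) * (n - 1) ∧ (w : ℕ) < (m - 1) * (n - 1) ∧
        (v : ℕ) / (n - 1) = (w : ℕ) / (n - 1)) ∨
      ((v : ℕ) = (m - 1) * (n - 1) ∧ (w : ℕ) = (m - 2) * (n - 1)) ∨
      ((w : ℕ) = (m - 1) * (n - 1) ∧ (v : ℕ) = (m - 2) * (n - 1)))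
  symm := by
    constructor
    intro v w h
    refine ⟨h.1.symm, ?_⟩
    tauto
  loopless := by
    constructor
    intro v h
    exact h.1 rfl

open Finset

namespace SimpleGraph.Walk

variable {V : Type*} {G : SimpleGraph V}

lemma IsCycle.notMem_support_of_subsingleton_neighborSet {u x : V} {c : G.Walk u u}
    (hc : c.IsCycle) (hx : (G.neighborSet x).Subsingleton) : x ∉ c.support := by
  classical
  intro hmem
  have hrot := hc.rotate hmem
  exact hrot.snd_ne_penultimate <|
    hx (adj_snd hrot.not_nil) (adj_penultimate hrot.not_nil).symm

lemma apply_eq_of_mem_support {β : Type*} {f : V → β} (hf : ∀ {v w}, G.Adj v w → f v = f w)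
    {u v x : V} (p : G.Walk u v) (hx : x ∈ p.support) : f x = f u := by
  induction p with
  | nil => rw [support_nil, List.mem_singleton] at hx; rw [hx]
  | cons h q ih =>
    rcases List.mem_cons.mp hx with rfl | hx
    · rfl
    · exact (ih hx).trans (hf h).symm

lemma IsCycle.length_le_card {u : V} {c : G.Walk u u} (hc : c.IsCycle) {s : Finset V}
    (hs : ∀ x ∈ c.support, x ∈ s) : c.length ≤ #s := by
  classical
  calc c.length = c.support.tail.length := by rw [List.length_tail, length_support]; rfl
    _ = #c.support.tail.toFinset := (List.toFinset_card_of_nodup hc.support_nodup).symm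
    _ ≤ #s := card_le_card fun x hx ↦ hs x (List.mem_of_mem_tail (List.mem_toFinset.mp hx))

end SimpleGraph.Walk

/-- The red clique containing `v`, numbered `0, …, m - 2`; the extra vertex joins the last one. -/
def redCriticalBlock (m n : ℕ) (v : Fin ((m - 1) * (n - 1) + 1)) : ℕ :=
  min (v / (n - 1)) (m - 2)

section redCritical

variable {m n : ℕ}

lemma redCritical_le_KStarG :
    redCritical m n ≤ KStarG ((m - 1) * (n - 1)) ((m - 2) * (n - 1) + 1) := by
  rintro v w ⟨hne, h⟩
  refine ⟨hne, fun hv ↦ ?_, fun hw ↦ ?_⟩ <;> omega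

lemma redCritical_neighborSet_last_subsingleton :
    ((redCritical m n).neighborSet (Fin.last _)).Subsingleton := by
  rintro w ⟨hne, h⟩ w' ⟨hne', h'⟩
  simp only [Fin.val_last, ne_eq, Fin.ext_iff] at *
  omega

lemma redCriticalBlock_of_lt {v : Fin ((m - 1) * (n - 1) + 1)}
    (hv : (v : ℕ) < (m - 1) * (n - 1)) : redCriticalBlock m n v = v / (n - 1) := by
  have : (v : ℕ) / (n - 1) < m - 1 := Nat.div_lt_of_lt_mul (hv.trans_eq (mul_comm _ _))
  exact min_eq_left (by omega)

lemma redCriticalBlock_of_val_eq_mul {v : Fin ((m - 1) * (n - 1) + 1)} {k : ℕ}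
    (hv : (v : ℕ) = k * (n - 1)) (hn : n - 1 ≠ 0) : redCriticalBlock m n v = min k (m - 2) := by
  rw [redCriticalBlock, hv, Nat.mul_div_cancel _ (Nat.pos_of_ne_zero hn)]

lemma redCriticalBlock_lt_last {u : Fin ((m - 1) * (n - 1) + 1)}
    (hu : (u : ℕ) < (m - 2) * (n - 1)) :
    redCriticalBlock m n u < redCriticalBlock m n (Fin.last _) := by
  have hu' : (u : ℕ) / (n - 1) < m - 2 := Nat.div_lt_of_lt_mul (hu.trans_eq (mul_comm _ _))
  rw [redCriticalBlock_of_val_eq_mul (Fin.val_last _)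
    (right_ne_zero_of_mul (Nat.ne_zero_of_lt hu))]
  have : redCriticalBlock m n u ≤ u / (n - 1) := min_le_left _ _
  omega

lemma redCriticalBlock_eq_of_adj {v w : Fin ((m - 1) * (n - 1) + 1)}
    (h : (redCritical m n).Adj v w) : redCriticalBlock m n v = redCriticalBlock m n w := by
  obtain ⟨hne, ⟨-, -, hvw⟩ | ⟨hv, hw⟩ | ⟨hw, hv⟩⟩ := h
  · rw [redCriticalBlock, redCriticalBlock, hvw]
  all_goals
    have hn : n - 1 ≠ 0 := fun hn ↦ hne (Fin.ext (by simp_all))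
    rw [redCriticalBlock_of_val_eq_mul hv hn, redCriticalBlock_of_val_eq_mul hw hn]
    omega

lemma redCriticalBlock_ne_of_adj {v w : Fin ((m - 1) * (n - 1) + 1)}
    (h : (KStarG ((m - 1) * (n - 1)) ((m - 2) * (n - 1) + 1) \ redCritical m n).Adj v w) :
    redCriticalBlock m n v ≠ redCriticalBlock m n w := by
  obtain ⟨⟨hne, hv, hw⟩, hred⟩ := h
  rcases v.is_le.lt_or_eq with hvN | hvN <;> rcases w.is_le.lt_or_eq with hwN | hwN
  · rw [redCriticalBlock_of_lt hvN, redCriticalBlock_of_lt hwN]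
    exact fun hvw ↦ hred ⟨hne, .inl ⟨hvN, hwN, hvw⟩⟩
  · have : (v : ℕ) ≠ (m - 2) * (n - 1) := fun h ↦ hred ⟨hne, .inr (.inr ⟨hwN, h⟩)⟩
    obtain rfl : w = Fin.last _ := Fin.ext hwN
    exact (redCriticalBlock_lt_last (by have := hw hwN; omega)).ne
  · have : (w : ℕ) ≠ (m - 2) * (n - 1) := fun h ↦ hred ⟨hne, .inr (.inl ⟨hvN, h⟩)⟩
    obtain rfl : v = Fin.last _ := Fin.ext hvN
    exact (redCriticalBlock_lt_last (by have := hv hvN; omega)).ne'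
  · exact absurd (Fin.ext (hvN.trans hwN.symm)) hne

lemma colorable_KStarG_sdiff_redCritical (hm : 2 ≤ m) :
    (KStarG ((m - 1) * (n - 1)) ((m - 2) * (n - 1) + 1) \ redCritical m n).Colorable (m - 1) :=
  (colorable_iff_exists_bdd_nat_coloring _).mpr
    ⟨Coloring.mk (redCriticalBlock m n) redCriticalBlock_ne_of_adj,
      fun v ↦ (min_le_right _ _).trans_lt (by omega)⟩

lemma card_redCriticalBlock_eq_le (q : ℕ) :
    #{v | v ≠ Fin.last _ ∧ redCriticalBlock m n v = q} ≤ n - 1 := by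
  refine (card_le_card_of_injOn (fun v : Fin _ ↦ (v : ℕ) % (n - 1)) (t := range (n - 1))
    ?_ ?_).trans_eq (card_range _)
  · intro v hv
    have hn := right_ne_zero_of_mul (Nat.ne_zero_of_lt (Fin.val_lt_last (mem_filter.1 hv).2.1))
    exact mem_range.2 (Nat.mod_lt _ (Nat.pos_of_ne_zero hn))
  · -- a vertex of the block `q` is determined by its remainder mod `n - 1`
    intro v hv w hw hvw
    obtain ⟨-, hvN, hvq⟩ := mem_filter.1 hv
    obtain ⟨-, hwN, hwq⟩ := mem_filter.1 hw
    rw [redCriticalBlock_of_lt (Fin.val_lt_last hvN)] at hvq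
    rw [redCriticalBlock_of_lt (Fin.val_lt_last hwN)] at hwq
    have hv' := Nat.div_add_mod v (n - 1)
    have hw' := Nat.div_add_mod w (n - 1)
    rw [hvq] at hv'
    rw [hwq] at hw'
    exact Fin.ext (by simp only at hvw; omega)

lemma redCritical_not_hasCycleOfLength : ¬ HasCycleOfLength (redCritical m n) n := by
  rintro ⟨u, c, hc, hn⟩
  have hlast := hc.notMem_support_of_subsingleton_neighborSet
    redCritical_neighborSet_last_subsingleton
  have hblock : ∀ x ∈ c.support,
      x ∈ ({v | v ≠ Fin.last _ ∧ redCriticalBlock m n v = redCriticalBlock m n u} :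
        Finset _) := fun x hx ↦
    mem_filter.2 ⟨mem_univ _, ne_of_mem_of_not_mem hx hlast,
      Walk.apply_eq_of_mem_support redCriticalBlock_eq_of_adj c hx⟩
  have hlen := (hc.length_le_card hblock).trans (card_redCriticalBlock_eq_le _)
  have := hc.three_le_length
  omega

end redCritical

theorem kStar_not_arrows_cycle_completeGraph_general (m n : ℕ) (hm : 7 ≤ m) :
    redCritical m n ≤ KStarG ((m - 1) * (n - 1)) ((m - 2) * (n - 1) + 1) ∧
    ¬ HasCycleOfLength (redCritical m n) n ∧
    ¬ ∃ s : Finset (Fin ((m - 1) * (n - 1) + 1)),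
        (KStarG ((m - 1) * (n - 1)) ((m - 2) * (n - 1) + 1) \ redCritical m n).IsNClique m s :=
  ⟨redCritical_le_KStarG, redCritical_not_hasCycleOfLength,
    fun ⟨s, hs⟩ ↦ (colorable_KStarG_sdiff_redCritical (by omega)).cliqueFree (by omega) s hs⟩

/-- For all `m ≥ 7` and `n ≥ (m-3)(m-1)`, there is a red/blue colouring of the edges of
`K_{(m-1)(n-1)} ⊔ K_{1,(m-2)(n-1)+1}` with no red cycle `C_n` and no blue `K_m`; such a
colouring is obtained by taking the red graph to consist of `m-2` pairwise vertex-disjoint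
copies of `K_{n-1}` together with a further disjoint copy of `K_{n-1}` joined by a single
red edge to the extra vertex, all remaining edges being blue. -/
theorem kStar_not_arrows_cycle_completeGraph (m n : ℕ) (hm : 7 ≤ m)
    (hn : (m - 3) * (m - 1) ≤ n) :
    redCritical m n ≤ KStarG ((m - 1) * (n - 1)) ((m - 2) * (n - 1) + 1) ∧
    ¬ HasCycleOfLength (redCritical m n) n ∧
    ¬ ∃ s : Finset (Fin ((m - 1) * (n - 1) + 1)),
        (KStarG ((m - 1) * (n - 1)) ((m - 2) * (n - 1) + 1) \ redCritical m n).IsNClique m s :=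
  kStar_not_arrows_cycle_completeGraph_general m n hm
end

section
/- Suppose a graph G contains the cycle (u_1, u_2, ..., u_{n-1}, u_1) of length n-1 but no cycle of length n, and let Y = V(G) \ {u_1, ..., u_{n-1}}. If a vertex x ∈ Y is adjacent to u_i and u_j, then u_{i+1}u_{j+1} is not an edge of G. -/
/-!
If `x` is adjacent to `u i` and `u j` and `u (i + 1)` to `u (j + 1)`, then
`x, u j, u (j - 1), …, u (i + 1), u (j + 1), u (j + 2), …, u i, x` is a cycle through `x` and
all `n - 1` vertices of the given cycle, i.e. a cycle of length `n`.
-/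

open SimpleGraph

namespace ZMod

theorem natCast_injOn_Iio (m : ℕ) : Set.InjOn (Nat.cast : ℕ → ZMod m) (Set.Iio m) := by
  intro s hs t ht hst
  rwa [natCast_eq_natCast_iff', Nat.mod_eq_of_lt hs, Nat.mod_eq_of_lt ht] at hst

theorem exists_eq_add_one_add_of_ne {m : ℕ} [NeZero m] {i j : ZMod m} (hij : i ≠ j) :
    ∃ k l : ℕ, k + l + 2 = m ∧ j = i + 1 + k := by
  have hd : (j - i).val ≠ 0 := (val_ne_zero _).mpr (sub_ne_zero.mpr hij.symm)
  have hdm : (j - i).val < m := val_lt _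
  refine ⟨(j - i).val - 1, m - 1 - (j - i).val, by omega, ?_⟩
  have h : (((j - i).val - 1 : ℕ) : ZMod m) + 1 = j - i := by
    rw [← Nat.cast_add_one, Nat.sub_add_cancel (Nat.pos_of_ne_zero hd), natCast_zmod_val]
  linear_combination -h

end ZMod

section

variable {V : Type*} {G : SimpleGraph V}

theorem exists_walk_support_eq_map_range' (f : ℕ → V) (hf : ∀ t, G.Adj (f t) (f (t + 1)))
    (s k : ℕ) :
    ∃ p : G.Walk (f s) (f (s + k)),
      p.length = k ∧ p.support = (List.range' s (k + 1)).map f := by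
  induction k with
  | zero => exact ⟨.nil, rfl, rfl⟩
  | succ k ih =>
    obtain ⟨p, hp_len, hp_supp⟩ := ih
    exact ⟨p.concat (hf (s + k)), by simp [hp_len], by simp [hp_supp, List.range'_1_concat]⟩

theorem hasCycleOfLength_of_isPath {a b x : V} {p : G.Walk a b} (hp : p.IsPath) (hab : a ≠ b)
    (hx : x ∉ p.support) (ha : G.Adj x a) (hb : G.Adj x b) :
    HasCycleOfLength G (p.length + 2) := by
  refine ⟨x, .cons ha (p.concat hb.symm),
    (Walk.cons_isCycle_iff _ ha).mpr ⟨hp.concat hx hb.symm, ?_⟩, by simp⟩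
  rw [Walk.edges_concat, List.concat_eq_append, List.mem_append, List.mem_singleton, not_or]
  refine ⟨fun he => hx (p.fst_mem_support_of_mem_edges he), fun he => ?_⟩
  rcases Sym2.eq_iff.mp he with ⟨rfl, -⟩ | ⟨-, rfl⟩
  · exact hx p.end_mem_support
  · exact hab rfl

theorem exists_isPath_through_chord {m : ℕ} {u : ZMod m → V} (hu : Function.Injective u)
    (hcyc : ∀ i, G.Adj (u i) (u (i + 1))) (i : ZMod m) {k l : ℕ}
    (hkl : k + l + 2 = m) (hchord : G.Adj (u (i + 1)) (u (i + 1 + k + 1))) :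
    ∃ p : G.Walk (u (i + 1 + k)) (u i), p.IsPath ∧ p.length = k + l + 1 ∧
      ∀ v ∈ p.support, v ∈ Set.range u := by
  let f : ℕ → V := fun t => u (i + 1 + t)
  have hf : ∀ t, G.Adj (f t) (f (t + 1)) := fun t => by
    simpa [f, add_assoc] using hcyc (i + 1 + t)
  obtain ⟨p, hp_len, hp_supp⟩ := exists_walk_support_eq_map_range' f hf 0 k
  obtain ⟨q, hq_len, hq_supp⟩ := exists_walk_support_eq_map_range' f hf (k + 1) l
  have hchord' : G.Adj (f 0) (f (k + 1)) := by simpa [f, add_assoc] using hchord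
  have hstart : f (0 + k) = u (i + 1 + k) := by simp [f]
  have hend : f (k + 1 + l) = u i := by
    have hm : ((k + l + 2 : ℕ) : ZMod m) = 0 := by rw [hkl, ZMod.natCast_self]
    simp only [f]
    congr 1
    push_cast at hm ⊢
    linear_combination hm
  let w := (p.reverse.append (.cons hchord' q)).copy hstart hend
  have hidx : List.range' 0 (k + 1) ++ List.range' (k + 1) (l + 1) = List.range' 0 m := by
    rw [← hkl, show k + l + 2 = k + 1 + (l + 1) by omega]
    simpa using List.range'_append_1 (s := 0) (m := k + 1) (n := l + 1)
  have hw_supp : w.support.Perm ((List.range' 0 m).map f) := by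
    simp only [w, Walk.support_copy, Walk.support_append, Walk.support_reverse, Walk.support_cons,
      List.tail_cons, hp_supp, hq_supp]
    rw [← List.map_reverse, ← List.map_append, ← hidx]
    exact ((List.reverse_perm _).append_right _).map f
  refine ⟨w, ?_, by simp [w, hp_len, hq_len]; omega, fun v hv => ?_⟩
  · rw [Walk.isPath_def, hw_supp.nodup_iff]
    refine (List.nodup_range' (s := 0) (n := m)).map_on fun s hs t ht hst => ?_
    simp only [List.mem_range'_1] at hs ht
    exact ZMod.natCast_injOn_Iio m (by simpa using hs.2) (by simpa using ht.2)
      (add_left_cancel (hu hst))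
  · obtain ⟨t, -, rfl⟩ := List.mem_map.mp (hw_supp.subset hv)
    exact ⟨_, rfl⟩

end

/-- Suppose `G` contains the cycle `(u_1, u_2, …, u_{n-1}, u_1)` of length `n-1`
(here encoded by an injective map `u : ZMod (n-1) → V` with consecutive vertices
adjacent) but no cycle of length `n`.  If a vertex `x` outside the cycle is adjacent
to `u_i` and `u_j`, then `u_{i+1} u_{j+1}` is not an edge of `G`. -/
theorem no_shifted_edge (n : ℕ) (hn : 4 ≤ n)
    {V : Type*} (G : SimpleGraph V)
    (u : ZMod (n - 1) → V) (hu : Function.Injective u)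
    (hcyc : ∀ i : ZMod (n - 1), G.Adj (u i) (u (i + 1)))
    (hno : ¬ HasCycleOfLength G n)
    (x : V) (hx : x ∉ Set.range u)
    (i j : ZMod (n - 1)) (hi : G.Adj x (u i)) (hj : G.Adj x (u j)) :
    ¬ G.Adj (u (i + 1)) (u (j + 1)) := by
  intro hadj
  have : NeZero (n - 1) := ⟨by omega⟩
  have hij : i ≠ j := fun h => hadj.ne (by rw [h])
  obtain ⟨k, l, hkl, rfl⟩ := ZMod.exists_eq_add_one_add_of_ne hij
  obtain ⟨p, hp, hp_len, hp_supp⟩ := exists_isPath_through_chord hu hcyc i hkl hadj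
  have hcycle := hasCycleOfLength_of_isPath hp (hu.ne hij.symm) (fun h => hx (hp_supp x h)) hj hi
  rw [hp_len, show k + l + 1 + 2 = n by omega] at hcycle
  exact hno hcycle
end

section
/- Suppose a graph G contains the cycle (u_1, u_2, ..., u_{n-1}, u_1) of length n-1 but no cycle of length n, and let Y = V(G) \ {u_1, ..., u_{n-1}}. If a vertex x ∈ Y is adjacent to u_i and u_j, then no vertex x' ∈ Y is adjacent to both u_{i+1} and u_{j+2}. -/
/-!
If `x = x'`, `i = j` or `i = j + 1`, one of `x`, `x'` is adjacent to two consecutive vertices of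
the cycle and can be inserted between them, giving a cycle of length `n`. Otherwise the cycle
splits into the arcs `u (j+2), …, u i` and `u (i+1), …, u j`, and
`x', u (j+2), …, u i, x, u j, …, u (i+1), x'` is a cycle of length `n`: the arcs have `n - 4`
edges together, and four edges meet `x` or `x'`.
-/

open SimpleGraph

namespace SimpleGraph.Walk

variable {V : Type*} {G : SimpleGraph V} {a b c d v w x y : V}

lemma IsPath.append_cons_cons {p : G.Walk a b} {q : G.Walk c d} (hp : p.IsPath)
    (hq : q.IsPath) (hyp : y ∉ p.support) (hyq : y ∉ q.support)
    (hpq : p.support.Disjoint q.support) (hby : G.Adj b y) (hyc : G.Adj y c) :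
    (p.append (cons hby (cons hyc q))).IsPath := by
  rw [isPath_def, support_append, support_cons, List.tail_cons, support_cons]
  refine hp.support_nodup.append (List.nodup_cons.mpr ⟨hyq, hq.support_nodup⟩) ?_
  exact List.disjoint_cons_right.mpr ⟨hyp, hpq⟩

lemma IsPath.hasCycleOfLength_length_add_two {p : G.Walk v w} (hp : p.IsPath) (hvw : v ≠ w)
    (hx : x ∉ p.support) (hxv : G.Adj x v) (hxw : G.Adj x w) :
    HasCycleOfLength G (p.length + 2) := by
  refine ⟨w, cons hxw.symm (cons hxv p), ?_, by simp only [length_cons]⟩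
  refine (cons_isCycle_iff _ _).mpr ⟨(cons_isPath_iff _ _).mpr ⟨hp, hx⟩, ?_⟩
  rw [edges_cons, List.mem_cons, Sym2.eq_iff]
  rintro ((⟨rfl, -⟩ | ⟨rfl, -⟩) | he)
  · exact hx p.end_mem_support
  · exact hvw rfl
  · exact hx (p.snd_mem_support_of_mem_edges he)

end SimpleGraph.Walk

lemma ZMod.natCast_injOn_Iio_s8 (m : ℕ) : Set.InjOn (Nat.cast : ℕ → ZMod m) (Set.Iio m) :=
  fun t ht s hs h => by
    rwa [ZMod.natCast_eq_natCast_iff', Nat.mod_eq_of_lt ht, Nat.mod_eq_of_lt hs] at h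

lemma ZMod.eq_or_eq_add_one_or_exists_gaps {m : ℕ} [NeZero m] (i j : ZMod m) :
    i = j ∨ i = j + 1 ∨ ∃ a b : ℕ, a + b + 3 = m ∧ j + 2 + b = i ∧ i + 1 + a = j := by
  obtain ⟨b, hb, rfl⟩ : ∃ b < m, j + 2 + b = i := ⟨(i - (j + 2)).val, ZMod.val_lt _, by simp⟩
  rcases (by omega : b + 2 = m ∨ b + 1 = m ∨ b + 3 ≤ m) with h | h | h
  · have := congrArg (Nat.cast : ℕ → ZMod m) h
    push_cast [ZMod.natCast_self] at this
    exact Or.inl (by linear_combination this)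
  · have := congrArg (Nat.cast : ℕ → ZMod m) h
    push_cast [ZMod.natCast_self] at this
    exact Or.inr (Or.inl (by linear_combination this))
  · have := congrArg (Nat.cast : ℕ → ZMod m) (Nat.sub_add_cancel h)
    push_cast [ZMod.natCast_self] at this
    exact Or.inr (Or.inr ⟨m - (b + 3), b, by omega, rfl, by linear_combination this⟩)

namespace SimpleGraph

variable {V : Type*} {G : SimpleGraph V} {m : ℕ} {u : ZMod m → V}

def cycleArc (hcyc : ∀ i, G.Adj (u i) (u (i + 1))) (a : ZMod m) :
    (k : ℕ) → G.Walk (u a) (u (a + k))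
  | 0 => Walk.nil.copy rfl (by simp)
  | k + 1 => ((cycleArc hcyc (a + 1) k).cons (hcyc a)).copy rfl (by push_cast; ring_nf)

section

variable (hcyc : ∀ i, G.Adj (u i) (u (i + 1)))

@[simp]
lemma length_cycleArc (a : ZMod m) (k : ℕ) : (cycleArc hcyc a k).length = k := by
  induction k generalizing a with
  | zero => simp [cycleArc]
  | succ k ih => simp [cycleArc, ih]

lemma support_cycleArc (a : ZMod m) (k : ℕ) :
    (cycleArc hcyc a k).support = (List.range (k + 1)).map (fun t : ℕ => u (a + t)) := by
  induction k generalizing a with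
  | zero => simp [cycleArc]
  | succ k ih =>
    rw [List.range_succ_eq_map]
    simp only [cycleArc, Walk.support_copy, Walk.support_cons, ih, List.map_cons, List.map_map]
    congr 1
    · simp
    · refine List.map_congr_left fun t _ => ?_
      simp only [Function.comp_apply, Nat.cast_succ]
      ring_nf

lemma mem_support_cycleArc {a : ZMod m} {k : ℕ} {v : V} :
    v ∈ (cycleArc hcyc a k).support ↔ ∃ t ≤ k, u (a + t) = v := by
  simp [support_cycleArc]

lemma mem_range_of_mem_support_cycleArc {a : ZMod m} {k : ℕ} {v : V}
    (hv : v ∈ (cycleArc hcyc a k).support) : v ∈ Set.range u := by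
  obtain ⟨t, -, rfl⟩ := (mem_support_cycleArc hcyc).mp hv
  exact ⟨_, rfl⟩

lemma isPath_cycleArc (hu : Function.Injective u) (a : ZMod m) {k : ℕ} (hk : k < m) :
    (cycleArc hcyc a k).IsPath := by
  rw [Walk.isPath_def, support_cycleArc]
  refine List.nodup_range.map_on fun t ht s hs h => ?_
  simp only [List.mem_range] at ht hs
  exact ZMod.natCast_injOn_Iio_s8 m (by simp; omega) (by simp; omega) (add_left_cancel (hu h))

lemma disjoint_support_cycleArc (hu : Function.Injective u) (a : ZMod m) {k l : ℕ}
    (hkl : k + l + 1 < m) :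
    (cycleArc hcyc a k).support.Disjoint (cycleArc hcyc (a + k + 1) l).support := by
  intro v hv hv'
  obtain ⟨t, ht, rfl⟩ := (mem_support_cycleArc hcyc).mp hv
  obtain ⟨s, hs, hts⟩ := (mem_support_cycleArc hcyc).mp hv'
  have : ((k + 1 + s : ℕ) : ZMod m) = t := by
    push_cast
    linear_combination hu hts
  have := ZMod.natCast_injOn_Iio_s8 m (by simp; omega) (by simp; omega) this
  omega

end

lemma hasCycleOfLength_succ_of_adj_adj_succ (hm : 2 ≤ m) (hu : Function.Injective u)
    (hcyc : ∀ i, G.Adj (u i) (u (i + 1))) {x : V}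
    (hx : x ∉ Set.range u) {k : ZMod m} (h1 : G.Adj x (u k)) (h2 : G.Adj x (u (k + 1))) :
    HasCycleOfLength G (m + 1) := by
  have : Fact (1 < m) := ⟨by omega⟩
  have hend : k + 1 + ((m - 1 : ℕ) : ZMod m) = k := by
    have := congrArg (Nat.cast : ℕ → ZMod m) (Nat.sub_add_cancel (by omega : 1 ≤ m))
    push_cast [ZMod.natCast_self] at this
    linear_combination this
  rw [← hend] at h1
  have hne : u (k + 1) ≠ u (k + 1 + ((m - 1 : ℕ) : ZMod m)) := by
    rw [hend, hu.ne_iff]; simp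
  have := (isPath_cycleArc hcyc hu (k + 1) (by omega : m - 1 < m)).hasCycleOfLength_length_add_two
    hne (fun hx' => hx (mem_range_of_mem_support_cycleArc hcyc hx')) h2 h1
  rwa [length_cycleArc, show m - 1 + 2 = m + 1 by omega] at this

lemma hasCycleOfLength_succ_of_crossing (hu : Function.Injective u)
    (hcyc : ∀ i, G.Adj (u i) (u (i + 1))) {a b : ℕ} (hab : a + b + 3 = m) {c : ZMod m}
    {x y : V} (hxy : x ≠ y) (hx : x ∉ Set.range u) (hy : y ∉ Set.range u)
    (hx₁ : G.Adj x (u (c + b))) (hx₂ : G.Adj x (u (c + b + 1 + a)))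
    (hy₁ : G.Adj y (u c)) (hy₂ : G.Adj y (u (c + b + 1))) :
    HasCycleOfLength G (m + 1) := by
  have harc₁ := isPath_cycleArc hcyc hu c (k := b) (by omega)
  have harc₂ := isPath_cycleArc hcyc hu (c + b + 1) (k := a) (by omega)
  have hpath := harc₁.append_cons_cons harc₂.reverse
    (fun h => hx (mem_range_of_mem_support_cycleArc hcyc h))
    (fun h => hx (mem_range_of_mem_support_cycleArc hcyc (by simpa using h)))
    (by simpa using disjoint_support_cycleArc hcyc hu c (l := a) (by omega)) hx₁.symm hx₂
  have hne : u c ≠ u (c + b + 1) := by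
    rw [hu.ne_iff]
    intro h
    have : ((b + 1 : ℕ) : ZMod m) = (0 : ℕ) := by push_cast; linear_combination -h
    have := ZMod.natCast_injOn_Iio_s8 m (by simp; omega) (by simp; omega) this
    omega
  have hyP : y ∉ ((cycleArc hcyc c b).append
      (Walk.cons hx₁.symm (Walk.cons hx₂ (cycleArc hcyc (c + b + 1) a).reverse))).support := by
    simp only [Walk.mem_support_append_iff, Walk.support_cons, Walk.support_reverse,
      List.mem_cons, List.mem_reverse]
    rintro (h | rfl | rfl | h)
    · exact hy (mem_range_of_mem_support_cycleArc hcyc h)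
    · exact hy (mem_range_of_mem_support_cycleArc hcyc (Walk.end_mem_support _))
    · exact hxy rfl
    · exact hy (mem_range_of_mem_support_cycleArc hcyc h)
  have := hpath.hasCycleOfLength_length_add_two hne hyP hy₁ hy₂
  rwa [Walk.length_append, Walk.length_cons, Walk.length_cons, Walk.length_reverse,
    length_cycleArc, length_cycleArc, show b + (a + 1 + 1) + 2 = m + 1 by omega] at this

end SimpleGraph

/-- Suppose `G` contains the cycle `(u_1, u_2, …, u_{n-1}, u_1)` of length `n-1`
(here encoded by an injective map `u : ZMod (n-1) → V` with consecutive vertices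
adjacent) but no cycle of length `n`.  If a vertex `x` outside the cycle is adjacent
to `u_i` and `u_j`, then no vertex `x'` outside the cycle is adjacent to both
`u_{i+1}` and `u_{j+2}`. -/
theorem no_shifted_common_neighbor (n : ℕ) (hn : 4 ≤ n)
    {V : Type*} (G : SimpleGraph V)
    (u : ZMod (n - 1) → V) (hu : Function.Injective u)
    (hcyc : ∀ i : ZMod (n - 1), G.Adj (u i) (u (i + 1)))
    (hno : ¬ HasCycleOfLength G n)
    (x : V) (hx : x ∉ Set.range u)
    (i j : ZMod (n - 1)) (hi : G.Adj x (u i)) (hj : G.Adj x (u j))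
    (x' : V) (hx' : x' ∉ Set.range u) :
    ¬ (G.Adj x' (u (i + 1)) ∧ G.Adj x' (u (j + 2))) := by
  rintro ⟨hx'₁, hx'₂⟩
  have hm : 2 ≤ n - 1 := by omega
  have : NeZero (n - 1) := ⟨by omega⟩
  suffices h : HasCycleOfLength G (n - 1 + 1) from hno (by rwa [Nat.sub_add_cancel (by omega)] at h)
  by_cases hxx : x = x'
  · subst hxx
    exact hasCycleOfLength_succ_of_adj_adj_succ hm hu hcyc hx hi hx'₁
  obtain rfl | rfl | ⟨a, b, hab, rfl, hend⟩ := ZMod.eq_or_eq_add_one_or_exists_gaps i j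
  · exact hasCycleOfLength_succ_of_adj_adj_succ hm hu hcyc hx' hx'₁
      (by rwa [add_assoc, one_add_one_eq_two])
  · exact hasCycleOfLength_succ_of_adj_adj_succ hm hu hcyc hx hj hi
  · exact hasCycleOfLength_succ_of_crossing hu hcyc hab hxx hx hx' hi (by rwa [hend]) hx'₂ hx'₁
end

section
/- Let m ≥ 7 and n ≥ (m-3)(m-1). Let G be a C_n-free graph of order (m-1)(n-1) with independence number at most m-1, let C be a cycle of length n-1 in G, and suppose the induced subgraph of G on V(G) \ V(C) contains m-2 pairwise vertex-disjoint copies of K_{n-1} covering all of its (m-2)(n-1) vertices. Then the vertices of C induce a complete graph K_{n-1} in G; consequently G contains a spanning subgraph isomorphic to (m-1)K_{n-1}. -/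
/-!
Write `N = n - 1`. As `G` has no cycle of length `N + 1`, a clique `K` of size `N` disjoint from
`C` has at most one vertex with a neighbour on `C`: if distinct `v, w ∈ K` are adjacent to `u a`
and `u b`, the shorter arc of `C` from `u b` to `u a`, of length `d ≤ N - 2`, followed by a path
of length `N - 1 - d` from `v` to `w` inside `K`, closes up to a cycle of length `N + 1`.
Similarly a vertex outside `K` has at most one neighbour in `K` (go through all of `K`).
So one can choose greedily, in each of the `m - 2` cliques, a vertex with no neighbour on `C`
and none among the vertices already chosen, since `N > m - 2`. Two non-adjacent vertices of `C`
would extend this to an independent set of size `m`.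
-/

open SimpleGraph

open Finset Function

section

variable {V : Type*} {G : SimpleGraph V}

lemma hasCycleOfLength_of_isPath_s17 {u v : V} {p : G.Walk u v} (hp : p.IsPath)
    (hlen : 2 ≤ p.length) (h : G.Adj v u) : HasCycleOfLength G (p.length + 1) := by
  refine ⟨v, .cons h p, (Walk.cons_isCycle_iff p h).2 ⟨hp, fun he => ?_⟩, rfl⟩
  have := hp.length_eq_one_of_mem_edges (Sym2.eq_swap ▸ he)
  omega

lemma SimpleGraph.Walk.IsPath.append_cons {u v w x : V} {p : G.Walk u v} {q : G.Walk w x}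
    (hp : p.IsPath) (hq : q.IsPath) (h : G.Adj v w) (hpq : p.support.Disjoint q.support) :
    (p.append (.cons h q)).IsPath := by
  rw [Walk.isPath_def, Walk.support_append, Walk.support_cons, List.tail_cons]
  exact hp.support_nodup.append hq.support_nodup hpq

lemma SimpleGraph.IsClique.exists_isPath {s : Finset V} (hs : G.IsClique (s : Set V))
    {v w : V} (hv : v ∈ s) (hw : w ∈ s) (hvw : v ≠ w) {k : ℕ} (hk : 1 ≤ k) (hks : k < #s) :
    ∃ p : G.Walk v w, p.IsPath ∧ p.length = k ∧ ∀ x ∈ p.support, x ∈ s := by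
  classical
  induction k, hk using Nat.le_induction generalizing v s with
  | base =>
    have h := hs hv hw hvw
    exact ⟨h.toWalk, h.isPath_toWalk, rfl, by simp [hv, hw]⟩
  | succ k hk ih =>
    have hks' : k < #(s.erase v) := by rw [card_erase_of_mem hv]; omega
    obtain ⟨x, hx, hxw⟩ := exists_mem_ne (by omega : 1 < #(s.erase v)) w
    obtain ⟨p, hp, hlen, hsupp⟩ :=
      ih (hs.subset (by simp)) hx (mem_erase.2 ⟨hvw.symm, hw⟩) hxw hks'
    refine ⟨.cons (hs hv (mem_of_mem_erase hx) (ne_of_mem_erase hx).symm) p,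
      hp.cons fun hvp => by simpa using hsupp v hvp, by simp [hlen], ?_⟩
    simp only [Walk.support_cons, List.mem_cons, forall_eq_or_imp]
    exact ⟨hv, fun y hy => mem_of_mem_erase (hsupp y hy)⟩

lemma exists_isPath_along_cycle {N : ℕ} [NeZero N] {u : ZMod N → V} (hu : Function.Injective u)
    (hcyc : ∀ i, G.Adj (u i) (u (i + 1))) (a b : ZMod N) :
    ∃ p : G.Walk (u b) (u a), p.IsPath ∧ p.length = (a - b).val ∧
      ∀ x ∈ p.support, x ∈ Set.range u := by
  suffices h : ∀ d < N, ∀ b, ∃ p : G.Walk (u b) (u (b + d)), p.IsPath ∧ p.length = d ∧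
      ∀ x ∈ p.support, ∃ i ≤ d, u (b + i) = x by
    obtain ⟨p, hp, hlen, hsupp⟩ := h _ (ZMod.val_lt (a - b)) b
    have hend : b + ((a - b).val : ZMod N) = a := by rw [ZMod.natCast_zmod_val]; ring
    refine ⟨p.copy rfl (by rw [hend]), by simpa using hp, by simpa using hlen, fun x hx => ?_⟩
    obtain ⟨i, -, rfl⟩ := hsupp x (by simpa using hx)
    exact Set.mem_range_self _
  intro d
  induction d with
  | zero => exact fun _ b => ⟨Walk.nil.copy rfl (by simp), by simp, by simp, by simp⟩
  | succ d ih =>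
    intro hd b
    obtain ⟨p, hp, hlen, hsupp⟩ := ih (by omega) (b + 1)
    -- `u b` is not on the arc `u (b + 1), …, u (b + 1 + d)` because `d + 1 < N`
    have hb : u b ∉ p.support := fun hb => by
      obtain ⟨i, hi, hbi⟩ := hsupp _ hb
      have h0 : ((i + 1 : ℕ) : ZMod N) = 0 := by
        have := hu hbi; push_cast; linear_combination this
      rw [ZMod.natCast_eq_zero_iff] at h0
      exact absurd (Nat.le_of_dvd (by omega) h0) (by omega)
    refine ⟨(Walk.cons (hcyc b) p).copy rfl (by push_cast; ring_nf), by simpa using ⟨hp, hb⟩,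
      by simp [hlen], fun x hx => ?_⟩
    simp only [Walk.support_copy, Walk.support_cons, List.mem_cons] at hx
    rcases hx with rfl | hx
    · exact ⟨0, by simp⟩
    · obtain ⟨i, hi, rfl⟩ := hsupp x hx
      exact ⟨i + 1, by omega, by push_cast; ring_nf⟩

lemma eq_of_adj_of_isNClique_of_not_hasCycleOfLength {N : ℕ}
    (hno : ¬HasCycleOfLength G (N + 1)) {s : Finset V} (hs : G.IsNClique N s) {x w w' : V}
    (hx : x ∉ s) (hw : w ∈ s) (hw' : w' ∈ s) (hxw : G.Adj x w) (hxw' : G.Adj x w') : w = w' := by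
  by_contra hne
  have h2 : 2 ≤ N := hs.card_eq ▸ one_lt_card.2 ⟨w, hw, w', hw', hne⟩
  obtain ⟨q, hq, hlen, hsupp⟩ :=
    hs.isClique.exists_isPath hw hw' hne (k := N - 1) (by omega) (by rw [hs.card_eq]; omega)
  have hp : (Walk.cons hxw q).IsPath := hq.cons fun hxq => hx (hsupp x hxq)
  have hplen : (Walk.cons hxw q).length = N := by rw [Walk.length_cons, hlen]; omega
  exact hno (hplen ▸ hasCycleOfLength_of_isPath_s17 hp (by omega) hxw'.symm)

lemma eq_of_adj_cycle_of_isNClique_of_not_hasCycleOfLength {N : ℕ} [NeZero N] (hN : 3 ≤ N)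
    (hno : ¬HasCycleOfLength G (N + 1)) {u : ZMod N → V} (hu : Function.Injective u)
    (hcyc : ∀ i, G.Adj (u i) (u (i + 1))) {s : Finset V} (hs : G.IsNClique N s)
    (hsu : ∀ x ∈ s, x ∉ Set.range u) {v w : V} {a b : ZMod N} (hv : v ∈ s) (hw : w ∈ s)
    (hva : G.Adj v (u a)) (hwb : G.Adj w (u b)) : v = w := by
  by_contra hvw
  wlog hd : (a - b).val ≤ N - 2 generalizing v w a b
  · -- here `(a - b).val = N - 1`, so `(b - a).val = 1 ≤ N - 2`
    refine this hw hv hwb hva (Ne.symm hvw) ?_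
    have hab : a - b ≠ 0 := fun h => by simp [h] at hd
    rw [← neg_sub, ZMod.neg_val, if_neg hab]
    have := ZMod.val_lt (a - b)
    omega
  obtain ⟨p, hp, hplen, hpsupp⟩ := exists_isPath_along_cycle hu hcyc a b
  obtain ⟨q, hq, hqlen, hqsupp⟩ := hs.isClique.exists_isPath hv hw hvw
    (k := N - 1 - (a - b).val) (by omega) (by rw [hs.card_eq]; omega)
  have hpq := hp.append_cons hq hva.symm
    (List.disjoint_left.2 fun x hxp hxq => hsu x (hqsupp x hxq) (hpsupp x hxp))
  have hlen : (p.append (.cons hva.symm q)).length = N := by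
    rw [Walk.length_append, Walk.length_cons, hplen, hqlen]; omega
  exact hno (hlen ▸ hasCycleOfLength_of_isPath_s17 hpq (by omega) hwb)

lemma exists_mem_not_adj_of_card_lt {P : V → Prop} {s X : Finset V}
    (hP : ∀ y ∈ s, ∀ y' ∈ s, P y → P y' → y = y')
    (hnbr : ∀ x ∉ s, ∀ y ∈ s, ∀ y' ∈ s, G.Adj x y → G.Adj x y' → y = y')
    (hXs : Disjoint X s) (hcard : #X + 1 < #s) :
    ∃ y ∈ s, ¬P y ∧ ∀ x ∈ X, ¬G.Adj x y := by
  classical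
  have hbad : #({y ∈ s | P y} ∪ X.biUnion fun x => {y ∈ s | G.Adj x y}) ≤ #X + 1 := by
    have hPcard : #{y ∈ s | P y} ≤ 1 :=
      card_le_one.2 fun y hy y' hy' => by
        simp only [mem_filter] at hy hy'
        exact hP y hy.1 y' hy'.1 hy.2 hy'.2
    have hnbrcard : ∀ x ∈ X, #{y ∈ s | G.Adj x y} ≤ 1 := fun x hx =>
      card_le_one.2 fun y hy y' hy' => by
        simp only [mem_filter] at hy hy'
        exact hnbr x (disjoint_left.1 hXs hx) y hy.1 y' hy'.1 hy.2 hy'.2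
    calc _ ≤ #{y ∈ s | P y} + #(X.biUnion fun x => {y ∈ s | G.Adj x y}) := card_union_le _ _
      _ ≤ 1 + ∑ _x ∈ X, 1 := add_le_add hPcard (card_biUnion_le.trans (sum_le_sum hnbrcard))
      _ = #X + 1 := by rw [card_eq_sum_ones, add_comm]
  obtain ⟨y, hy, hyb⟩ := exists_mem_notMem_of_card_lt_card (hbad.trans_lt hcard)
  simp only [mem_union, mem_filter, mem_biUnion, not_or, not_and, not_exists] at hyb
  exact ⟨y, hy, hyb.1 hy, fun x hx => hyb.2 x hx hy⟩

lemma exists_isIndepSet_of_forall_card_lt {ι : Type*} {P : V → Prop} {f : ι → Finset V}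
    (hdisj : Pairwise (Disjoint on f)) (hP : ∀ i, ∀ y ∈ f i, ∀ y' ∈ f i, P y → P y' → y = y')
    (hnbr : ∀ i, ∀ x ∉ f i, ∀ y ∈ f i, ∀ y' ∈ f i, G.Adj x y → G.Adj x y' → y = y')
    (S : Finset ι) (hS : ∀ i ∈ S, #S < #(f i)) :
    ∃ T : Finset V, (∀ y ∈ T, ∃ i ∈ S, y ∈ f i) ∧ #T = #S ∧ (∀ y ∈ T, ¬P y) ∧ G.IsIndepSet T := by
  classical
  induction S using Finset.induction_on with
  | empty => exact ⟨∅, by simp, rfl, by simp, by simp⟩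
  | insert k S hk ih =>
    have hSk : #(insert k S) = #S + 1 := card_insert_of_notMem hk
    obtain ⟨T, hTS, hTcard, hTP, hTind⟩ :=
      ih fun i hi => (hS i (mem_insert_of_mem hi)).trans' (by omega)
    have hTk : Disjoint T (f k) := disjoint_left.2 fun y hyT hyk => by
      obtain ⟨j, hj, hyj⟩ := hTS y hyT
      exact disjoint_left.1 (hdisj (ne_of_mem_of_not_mem hj hk)) hyj hyk
    obtain ⟨y, hyk, hyP, hyT⟩ := exists_mem_not_adj_of_card_lt (hP k) (hnbr k) hTk
      (by have := hS k (mem_insert_self k S); omega)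
    have hyT' : y ∉ T := fun hy => disjoint_left.1 hTk hy hyk
    refine ⟨insert y T, ?_, by rw [card_insert_of_notMem hyT', hTcard, hSk], ?_, ?_⟩
    · simpa [hyk] using fun x hx => Or.inr (hTS x hx)
    · simpa [hyP] using hTP
    · rw [coe_insert]
      exact hTind.insert fun x hx _ => ⟨fun h => hyT x hx h.symm, hyT x hx⟩

lemma SimpleGraph.IsIndepSet.isClique_of_forall_not_adj {k : ℕ}
    (hα : ∀ s : Finset V, G.IsIndepSet s → #s ≤ k + 1) {T : Finset V} (hT : G.IsIndepSet T)
    (hTcard : #T = k) {C : Set V} (hCT : ∀ x ∈ C, x ∉ T) (hnadj : ∀ x ∈ C, ∀ y ∈ T, ¬G.Adj x y) :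
    G.IsClique C := by
  classical
  intro x hx y hy hxy
  by_contra hxy'
  have hind : G.IsIndepSet ↑(insert x (insert y T)) := by
    simp only [coe_insert]
    refine (hT.insert fun z hz _ => ⟨hnadj y hy z hz, fun h => hnadj y hy z hz h.symm⟩).insert
      fun z hz _ => ?_
    rcases hz with rfl | hz
    · exact ⟨hxy', fun h => hxy' h.symm⟩
    · exact ⟨hnadj x hx z hz, fun h => hnadj x hx z hz h.symm⟩
  have := hα _ hind
  rw [card_insert_of_notMem (by simp [hxy, hCT x hx]), card_insert_of_notMem (hCT y hy),
    hTcard] at this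
  omega

lemma exists_cons_cliquePartition {N k : ℕ} {C : Finset V} (hC : G.IsNClique N C)
    {f : Fin k → Finset V} (hf : ∀ i, G.IsNClique N (f i))
    (hdisj : ∀ i j, i ≠ j → Disjoint (f i) (f j)) (hCf : ∀ i, Disjoint C (f i))
    (hcover : ∀ v ∉ C, ∃ i, v ∈ f i) :
    ∃ g : Fin (k + 1) → Finset V, (∀ i, G.IsNClique N (g i)) ∧
      (∀ i j, i ≠ j → Disjoint (g i) (g j)) ∧ ∀ v, ∃ i, v ∈ g i := by
  refine ⟨Fin.cons C f, Fin.cases hC hf, fun i j hij => ?_, fun v => ?_⟩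
  · cases i using Fin.cases <;> cases j using Fin.cases
    · exact absurd rfl hij
    · exact hCf _
    · exact (hCf _).symm
    · exact hdisj _ _ fun h => hij (congrArg Fin.succ h)
  · by_cases hv : v ∈ C
    · exact ⟨0, hv⟩
    · obtain ⟨i, hi⟩ := hcover v hv
      exact ⟨i.succ, hi⟩

end

theorem cycle_induces_clique_of_partition_outside_general (m n : ℕ) (hm : 7 ≤ m)
    (hn : (m - 3) * (m - 1) ≤ n)
    {V : Type*} (G : SimpleGraph V)
    (hno : ¬ HasCycleOfLength G n)
    (hα : ∀ s : Finset V, (s : Set V).Pairwise (fun a b => ¬ G.Adj a b) → s.card ≤ m - 1)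
    (u : ZMod (n - 1) → V) (hu : Function.Injective u)
    (hcyc : ∀ i : ZMod (n - 1), G.Adj (u i) (u (i + 1)))
    (f : Fin (m - 2) → Finset V)
    (hclique : ∀ i, G.IsNClique (n - 1) (f i))
    (hdisj : ∀ i j, i ≠ j → Disjoint (f i) (f j))
    (hout : ∀ i, ∀ v ∈ f i, v ∉ Set.range u)
    (hcover : ∀ v : V, v ∉ Set.range u → ∃ i, v ∈ f i) :
    (∀ i j : ZMod (n - 1), u i ≠ u j → G.Adj (u i) (u j)) ∧
    ∃ g : Fin (m - 1) → Finset V,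
      (∀ i, G.IsNClique (n - 1) (g i)) ∧
      (∀ i j, i ≠ j → Disjoint (g i) (g j)) ∧
      (∀ v : V, ∃ i, v ∈ g i) := by
  classical
  have hmn : m + 1 < n := by
    have : 4 * (m - 1) ≤ (m - 3) * (m - 1) := Nat.mul_le_mul_right _ (by omega)
    omega
  have : NeZero (n - 1) := ⟨by omega⟩
  have hno' : ¬HasCycleOfLength G (n - 1 + 1) := by rwa [Nat.sub_add_cancel (by omega)]
  obtain ⟨T, hTf, hTcard, hTu, hTind⟩ := exists_isIndepSet_of_forall_card_lt
    (P := fun y => ∃ c, G.Adj y (u c)) (f := f) hdisj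
    (fun i _ hy _ hy' ⟨_, ha⟩ ⟨_, hb⟩ => eq_of_adj_cycle_of_isNClique_of_not_hasCycleOfLength
      (by omega) hno' hu hcyc (hclique i) (hout i) hy hy' ha hb)
    (fun i _ hx _ hy _ hy' =>
      eq_of_adj_of_isNClique_of_not_hasCycleOfLength hno' (hclique i) hx hy hy')
    univ (fun i _ => by rw [card_univ, Fintype.card_fin, (hclique i).card_eq]; omega)
  have hC : G.IsClique (Set.range u) := by
    refine hTind.isClique_of_forall_not_adj (k := m - 2) (fun s hs => (hα s hs).trans (by omega))
      (by rw [hTcard, card_univ, Fintype.card_fin]) ?_ ?_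
    · rintro _ ⟨c, rfl⟩ hc
      obtain ⟨i, -, hci⟩ := hTf _ hc
      exact hout i _ hci ⟨c, rfl⟩
    · rintro _ ⟨c, rfl⟩ y hy h
      exact hTu y hy ⟨c, h.symm⟩
  rw [show m - 1 = m - 2 + 1 by omega]
  refine ⟨fun a b hab => hC ⟨a, rfl⟩ ⟨b, rfl⟩ hab,
    exists_cons_cliquePartition (C := univ.image u) ⟨?_, ?_⟩ hclique hdisj ?_ ?_⟩
  · simpa only [coe_image, coe_univ, Set.image_univ] using hC
  · rw [card_image_of_injective _ hu, card_univ, ZMod.card]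
  · exact fun i => disjoint_right.2 fun v hv hvC => hout i v hv (by simpa using hvC)
  · exact fun v hv => hcover v (by simpa using hv)

/-- Let `m ≥ 7` and `n ≥ (m-3)(m-1)`.  Let `G` be a `C_n`-free graph of order
`(m-1)(n-1)` with independence number at most `m-1`, let `C` be a cycle of length `n-1`
in `G` (encoded by an injective `u : ZMod (n-1) → V` with consecutive vertices adjacent),
and suppose the induced subgraph of `G` on `V(G) \ V(C)` contains `m-2` pairwise
vertex-disjoint copies of `K_{n-1}` covering all of its `(m-2)(n-1)` vertices.  Then the
vertices of `C` induce a complete graph `K_{n-1}` in `G`; consequently `G` contains a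
spanning subgraph isomorphic to `(m-1)K_{n-1}`. -/
theorem cycle_induces_clique_of_partition_outside (m n : ℕ) (hm : 7 ≤ m)
    (hn : (m - 3) * (m - 1) ≤ n)
    {V : Type*} [Fintype V] (G : SimpleGraph V)
    (hcard : Fintype.card V = (m - 1) * (n - 1))
    (hno : ¬ HasCycleOfLength G n)
    (hα : ∀ s : Finset V, (s : Set V).Pairwise (fun a b => ¬ G.Adj a b) → s.card ≤ m - 1)
    (u : ZMod (n - 1) → V) (hu : Function.Injective u)
    (hcyc : ∀ i : ZMod (n - 1), G.Adj (u i) (u (i + 1)))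
    (f : Fin (m - 2) → Finset V)
    (hclique : ∀ i, G.IsNClique (n - 1) (f i))
    (hdisj : ∀ i j, i ≠ j → Disjoint (f i) (f j))
    (hout : ∀ i, ∀ v ∈ f i, v ∉ Set.range u)
    (hcover : ∀ v : V, v ∉ Set.range u → ∃ i, v ∈ f i) :
    (∀ i j : ZMod (n - 1), u i ≠ u j → G.Adj (u i) (u j)) ∧
    ∃ g : Fin (m - 1) → Finset V,
      (∀ i, G.IsNClique (n - 1) (g i)) ∧
      (∀ i j, i ≠ j → Disjoint (g i) (g j)) ∧
      (∀ v : V, ∃ i, v ∈ g i) :=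
  cycle_induces_clique_of_partition_outside_general m n hm hn G hno hα u hu hcyc f hclique hdisj
    hout hcover
end
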